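/- arXiv:2007.00593 — 5 statements merged into one kernel-verified Lean document; each statement's English description precedes it below -/
import Mathlib

section
/- Let J ∈ E and φ ∈ ℝ satisfy |φ|·‖J‖ < (√2 − 1)/2, and set J̄ := J − (1/2 + φ‖J‖)·h(J). Then ‖J̄‖_h ≤ ‖J‖ − φ·⟨h(J), J⟩ (in particular the right-hand side is nonnegative). This is the key inequality in the proof of the lemma on preservation of the dominant energy scalar under the (φ,J)-modified constraint operator. -/
/-!
Write `a := 1/2 + φ‖J‖` and `t := ⟪h J, J⟫`. Since `h` is self-adjoint, the perturbed square norm of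
`J - a • h J` is `‖J‖² + (1 - 2a) t + (a² - 2a) ‖h J‖² + a² ⟪h (h J), h J⟫`. As `‖h‖ ≤ 1` the last
term is at most `a² ‖h J‖²`, and the smallness of `|φ|‖J‖` gives `0 ≤ a ≤ 1`, so the two `‖h J‖²`
terms together are nonpositive. What remains is `‖J‖² - 2φ‖J‖ t ≤ (‖J‖ - φ t)²`, and
`|φ t| ≤ |φ| ‖J‖² ≤ ‖J‖ / 2` makes `‖J‖ - φ t` nonnegative.
-/

open scoped RealInnerProductSpace

/-- The norm associated to the perturbed inner product
`⟪v, w⟫_h := ⟪v, w⟫ + ⟪h v, w⟫` coming from a perturbation `h` of the metric. -/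
noncomputable def perturbedNorm {E : Type*} [NormedAddCommGroup E] [InnerProductSpace ℝ E]
    (h : E →L[ℝ] E) (v : E) : ℝ :=
  Real.sqrt (⟪v, v⟫ + ⟪h v, v⟫)

section

variable {E : Type*} [NormedAddCommGroup E] [InnerProductSpace ℝ E]

theorem abs_inner_apply_self_le (T : E →L[ℝ] E) (v : E) : |⟪T v, v⟫| ≤ ‖T‖ * ‖v‖ ^ 2 :=
  calc |⟪T v, v⟫| ≤ ‖T v‖ * ‖v‖ := abs_real_inner_le_norm _ _
    _ ≤ ‖T‖ * ‖v‖ * ‖v‖ := by gcongr; exact T.le_opNorm v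
    _ = ‖T‖ * ‖v‖ ^ 2 := by ring

theorem abs_inner_apply_self_le_norm_sq {T : E →L[ℝ] E} (hT : ‖T‖ ≤ 1) (v : E) :
    |⟪T v, v⟫| ≤ ‖v‖ ^ 2 :=
  (abs_inner_apply_self_le T v).trans (mul_le_of_le_one_left (sq_nonneg _) hT)

theorem perturbedNorm_le_of_sq_le {h : E →L[ℝ] E} {v : E} {r : ℝ} (hr : 0 ≤ r)
    (hv : ⟪v, v⟫ + ⟪h v, v⟫ ≤ r ^ 2) : perturbedNorm h v ≤ r :=
  Real.sqrt_le_iff.mpr ⟨hr, hv⟩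

variable {h : E →L[ℝ] E}

theorem LinearMap.IsSymmetric.perturbed_inner_sub_smul_apply (hh : (h : E →ₗ[ℝ] E).IsSymmetric)
    (a : ℝ) (v : E) :
    ⟪v - a • h v, v - a • h v⟫ + ⟪h (v - a • h v), v - a • h v⟫ =
      ‖v‖ ^ 2 + (1 - 2 * a) * ⟪h v, v⟫ + (a ^ 2 - 2 * a) * ‖h v‖ ^ 2
        + a ^ 2 * ⟪h (h v), h v⟫ := by
  have hv : ⟪v, h v⟫ = ⟪h v, v⟫ := real_inner_comm _ _
  have hhv : ⟪h (h v), v⟫ = ⟪h v, h v⟫ := hh (h v) v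
  rw [← real_inner_self_eq_norm_sq v, ← real_inner_self_eq_norm_sq (h v)]
  simp only [map_sub, map_smul, inner_sub_left, inner_sub_right, real_inner_smul_left,
    real_inner_smul_right, hv, hhv]
  ring

theorem LinearMap.IsSymmetric.perturbed_inner_sub_smul_apply_le
    (hh : (h : E →ₗ[ℝ] E).IsSymmetric) (h_le : ‖h‖ ≤ 1) {a : ℝ} (ha₀ : 0 ≤ a) (ha₁ : a ≤ 1)
    (v : E) :
    ⟪v - a • h v, v - a • h v⟫ + ⟪h (v - a • h v), v - a • h v⟫ ≤
      ‖v‖ ^ 2 + (1 - 2 * a) * ⟪h v, v⟫ := by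
  have hc : ⟪h (h v), h v⟫ ≤ ‖h v‖ ^ 2 :=
    (le_abs_self _).trans (abs_inner_apply_self_le_norm_sq h_le _)
  rw [hh.perturbed_inner_sub_smul_apply]
  nlinarith [mul_le_mul_of_nonneg_left hc (sq_nonneg a),
    mul_nonneg (mul_nonneg ha₀ (sq_nonneg ‖h v‖)) (sub_nonneg.mpr ha₁)]

end

theorem perturbedNorm_modified_current_le_general
    {E : Type*} [NormedAddCommGroup E] [InnerProductSpace ℝ E]
    (h : E →L[ℝ] E) (hsa : ∀ v w : E, ⟪h v, w⟫ = ⟪v, h w⟫) (hnorm : ‖h‖ < 1)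
    (J : E) (φ : ℝ) (hφ : |φ| * ‖J‖ < (Real.sqrt 2 - 1) / 2) :
    perturbedNorm h (J - (1 / 2 + φ * ‖J‖) • h J) ≤ ‖J‖ - φ * ⟪h J, J⟫ ∧
      0 ≤ ‖J‖ - φ * ⟪h J, J⟫ := by
  have hφJ : |φ * ‖J‖| ≤ 1 / 2 := by
    rw [abs_mul, abs_norm]
    have : √2 < 2 := (Real.sqrt_lt' two_pos).mpr (by norm_num)
    linarith
  obtain ⟨hφJ₀, hφJ₁⟩ := abs_le.mp hφJ
  have ht : |φ * ⟪h J, J⟫| ≤ ‖J‖ / 2 := by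
    rw [abs_mul]
    calc |φ| * |⟪h J, J⟫| ≤ |φ| * ‖J‖ ^ 2 := by
          gcongr
          exact abs_inner_apply_self_le_norm_sq hnorm.le J
      _ = |φ * ‖J‖| * ‖J‖ := by rw [abs_mul, abs_norm]; ring
      _ ≤ 1 / 2 * ‖J‖ := by gcongr
      _ = ‖J‖ / 2 := by ring
  have hrhs : 0 ≤ ‖J‖ - φ * ⟪h J, J⟫ := by linarith [le_abs_self (φ * ⟪h J, J⟫), norm_nonneg J]
  refine ⟨perturbedNorm_le_of_sq_le hrhs ?_, hrhs⟩
  refine (LinearMap.IsSymmetric.perturbed_inner_sub_smul_apply_le hsa hnorm.le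
    (by linarith) (by linarith) J).trans ?_
  nlinarith [sq_nonneg (φ * ⟪h J, J⟫)]

/-- if `|φ|·‖J‖ < (√2 − 1)/2` and `J̄ := J − (1/2 + φ‖J‖)·h(J)`, then
`‖J̄‖_h ≤ ‖J‖ − φ·⟨h(J), J⟩`, the right-hand side being nonnegative. -/
theorem perturbedNorm_modified_current_le
    {E : Type*} [NormedAddCommGroup E] [InnerProductSpace ℝ E] [FiniteDimensional ℝ E]
    (h : E →L[ℝ] E) (hsa : ∀ v w : E, ⟪h v, w⟫ = ⟪v, h w⟫) (hnorm : ‖h‖ < 1)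
    (J : E) (φ : ℝ) (hφ : |φ| * ‖J‖ < (Real.sqrt 2 - 1) / 2) :
    perturbedNorm h (J - (1 / 2 + φ * ‖J‖) • h J) ≤ ‖J‖ - φ * ⟪h J, J⟫ ∧
      0 ≤ ‖J‖ - φ * ⟪h J, J⟫ :=
  perturbedNorm_modified_current_le_general h hsa hnorm J φ hφ
end

section
/- Let J ∈ E and φ ∈ ℝ satisfy |φ|·‖J‖ < (√2 − 1)/2, and let μ, u ∈ ℝ. Set J̄ := J − (1/2 + φ‖J‖)·h(J) and μ̄ := μ + u/2 − φ·⟨h(J), J⟩. Then 2(μ̄ − ‖J̄‖_h) ≥ 2(μ − ‖J‖) + u. (Pointwise form of the lemma: if Φ^{(φ,J)}_{(γ,τ)}(γ̄,τ̄) = Φ^{(φ,J)}_{(γ,τ)}(γ,τ) + (u,0) with |γ̄−γ|_γ < 1 and |φJ|_γ < (√2−1)/2, then σ(γ̄,τ̄) ≥ σ(γ,τ) + u.) -/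
/-!
With `n := ‖J‖`, `x := φ n` and `a := 1/2 + x`, self-adjointness expands the perturbed square
norm of `J - a • h J` as `n² - 2 x ⟪h J, J⟫ + (a² - 2a) ‖h J‖² + a² ⟪h (h J), h J⟫`. Since
`‖h‖ ≤ 1` the last term is at most `a² ‖h J‖²`, and `2a² - 2a = 2x² - 1/2 ≤ 0` once `|x| ≤ 1/2`.
Hence `‖J̄‖_h² ≤ n² - 2 x ⟪h J, J⟫ ≤ (n - φ ⟪h J, J⟫)²`, i.e. `‖J̄‖_h ≤ ‖J‖ - φ ⟪h J, J⟫`, and the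
`φ ⟪h J, J⟫` terms cancel against the shift of `μ̄`.
-/

open scoped RealInnerProductSpace

section PerturbedNorm

variable {E : Type*} [NormedAddCommGroup E] [InnerProductSpace ℝ E]

theorem real_inner_apply_self_le_opNorm_mul_sq (T : E →L[ℝ] E) (v : E) :
    ⟪T v, v⟫ ≤ ‖T‖ * ‖v‖ ^ 2 :=
  calc ⟪T v, v⟫ ≤ ‖T v‖ * ‖v‖ := real_inner_le_norm _ _
    _ ≤ ‖T‖ * ‖v‖ * ‖v‖ := by gcongr; exact T.le_opNorm v
    _ = ‖T‖ * ‖v‖ ^ 2 := by ring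

theorem perturbedNorm_le_iff {h : E →L[ℝ] E} {v : E} {c : ℝ} (hc : 0 ≤ c) :
    perturbedNorm h v ≤ c ↔ ⟪v, v⟫ + ⟪h v, v⟫ ≤ c ^ 2 :=
  Real.sqrt_le_left hc

theorem real_inner_self_add_inner_apply_sub_smul_apply {h : E →L[ℝ] E} (hsa : (h : E →ₗ[ℝ] E).IsSymmetric)
    (v : E) (a : ℝ) :
    ⟪v - a • h v, v - a • h v⟫ + ⟪h (v - a • h v), v - a • h v⟫ =
      ‖v‖ ^ 2 + (1 - 2 * a) * ⟪h v, v⟫ + (a ^ 2 - 2 * a) * ‖h v‖ ^ 2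
        + a ^ 2 * ⟪h (h v), h v⟫ := by
  have hsymm : ⟪h (h v), v⟫ = ‖h v‖ ^ 2 := by
    rw [← real_inner_self_eq_norm_sq]
    exact hsa (h v) v
  simp only [map_sub, map_smul, inner_sub_left, inner_sub_right, inner_smul_left,
    inner_smul_right, RCLike.conj_to_real, real_inner_self_eq_norm_sq, hsymm,
    real_inner_comm v (h v)]
  ring

theorem perturbedNorm_sub_smul_apply_le {h : E →L[ℝ] E} (hsa : (h : E →ₗ[ℝ] E).IsSymmetric)
    (hnorm : ‖h‖ ≤ 1) {J : E} {φ : ℝ} (hφ : |φ| * ‖J‖ ≤ 1 / 2) :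
    perturbedNorm h (J - (1 / 2 + φ * ‖J‖) • h J) ≤ ‖J‖ - φ * ⟪h J, J⟫ := by
  set n := ‖J‖
  set t := ⟪h J, J⟫
  have hhJ : ‖h J‖ ≤ n := (h.le_of_opNorm_le hnorm J).trans_eq (one_mul n)
  have hr : ⟪h (h J), h J⟫ ≤ ‖h J‖ ^ 2 :=
    (real_inner_apply_self_le_opNorm_mul_sq h (h J)).trans
      (mul_le_of_le_one_left (sq_nonneg _) hnorm)
  have hx : (φ * n) ^ 2 ≤ 1 / 4 := by
    rw [← sq_abs, abs_mul, abs_norm]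
    nlinarith [mul_nonneg (abs_nonneg φ) (norm_nonneg J)]
  have hφt : φ * t ≤ n / 2 :=
    calc φ * t ≤ |φ| * |t| := by rw [← abs_mul]; exact le_abs_self _
      _ ≤ |φ| * (n * n) := by
          gcongr
          exact (abs_real_inner_le_norm _ _).trans (by gcongr)
      _ = |φ| * n * n := by ring
      _ ≤ 1 / 2 * n := by gcongr
      _ = n / 2 := by ring
  rw [perturbedNorm_le_iff (by linarith [norm_nonneg J]),
    real_inner_self_add_inner_apply_sub_smul_apply hsa]
  set a := 1 / 2 + φ * n with ha
  calc n ^ 2 + (1 - 2 * a) * t + (a ^ 2 - 2 * a) * ‖h J‖ ^ 2 + a ^ 2 * ⟪h (h J), h J⟫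
      ≤ n ^ 2 - 2 * φ * n * t + (2 * (φ * n) ^ 2 - 1 / 2) * ‖h J‖ ^ 2 := by
        have hr' := mul_le_mul_of_nonneg_left hr (sq_nonneg a)
        rw [ha] at hr' ⊢
        linarith
    _ ≤ n ^ 2 - 2 * φ * n * t := by nlinarith [sq_nonneg ‖h J‖]
    _ ≤ (n - φ * t) ^ 2 := by nlinarith [sq_nonneg (φ * t)]

end PerturbedNorm

theorem dominantEnergyScalar_ge_of_phiJ_modified_general
    {E : Type*} [NormedAddCommGroup E] [InnerProductSpace ℝ E]
    (h : E →L[ℝ] E) (hsa : ∀ v w : E, ⟪h v, w⟫ = ⟪v, h w⟫) (hnorm : ‖h‖ < 1)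
    (J : E) (φ : ℝ) (hφ : |φ| * ‖J‖ < (Real.sqrt 2 - 1) / 2) (μ u : ℝ) :
    2 * ((μ + u / 2 - φ * ⟪h J, J⟫) - perturbedNorm h (J - (1 / 2 + φ * ‖J‖) • h J))
      ≥ 2 * (μ - ‖J‖) + u := by
  have hφ' : |φ| * ‖J‖ ≤ 1 / 2 := by linarith [Real.sqrt_two_lt_three_halves]
  have := perturbedNorm_sub_smul_apply_le hsa hnorm.le hφ'
  linarith

/-- with `J̄ := J − (1/2 + φ‖J‖)·h(J)` and `μ̄ := μ + u/2 − φ·⟨h(J), J⟩`,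
if `|φ|·‖J‖ < (√2 − 1)/2` then `2(μ̄ − ‖J̄‖_h) ≥ 2(μ − ‖J‖) + u`. -/
theorem dominantEnergyScalar_ge_of_phiJ_modified
    {E : Type*} [NormedAddCommGroup E] [InnerProductSpace ℝ E] [FiniteDimensional ℝ E]
    (h : E →L[ℝ] E) (hsa : ∀ v w : E, ⟪h v, w⟫ = ⟪v, h w⟫) (hnorm : ‖h‖ < 1)
    (J : E) (φ : ℝ) (hφ : |φ| * ‖J‖ < (Real.sqrt 2 - 1) / 2) (μ u : ℝ) :
    2 * ((μ + u / 2 - φ * ⟪h J, J⟫) - perturbedNorm h (J - (1 / 2 + φ * ‖J‖) • h J))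
      ≥ 2 * (μ - ‖J‖) + u :=
  dominantEnergyScalar_ge_of_phiJ_modified_general h hsa hnorm J φ hφ μ u
end

section
/- Let J, Z ∈ E and φ ∈ ℝ with |φ| < 1 and ‖Z‖ < 1, and set J̄ := J − (1/2)·h(J) − φ‖Z‖·h(Z). Then ‖J̄‖_h ≤ ‖J‖ + 2·‖h‖^{1/2}·|φ|^{1/2}·‖Z‖·(‖J‖^{1/2} + 1). This is the key inequality in the proof of the error estimate for the (φ,Z)-modified constraint operator. -/
open scoped RealInnerProductSpace

/-!
`‖·‖_h` comes from the symmetric form `⟪(1 + h) v, w⟫`, which is positive semidefinite as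
`‖h‖ ≤ 1`, so it satisfies the triangle inequality. For `a = J - h J / 2` one has
`‖a‖_h² = ‖J‖² - (3/4)‖h J‖² + (1/4)⟪h (h J), h J⟫ ≤ ‖J‖²`, while `‖·‖_h ≤ √(1 + ‖h‖) ‖·‖` bounds
the remaining term by `√2 |φ| ‖h‖ ‖Z‖² ≤ 2 √‖h‖ √|φ| ‖Z‖`.
-/

theorem Real.self_le_sqrt_of_le_one {t : ℝ} (h0 : 0 ≤ t) (h1 : t ≤ 1) : t ≤ √t :=
  (Real.le_sqrt h0 h0).2 (by nlinarith)

namespace LinearMap.BilinForm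

variable {M : Type*} [AddCommGroup M] [Module ℝ M]

theorem sqrt_apply_sub_le (B : LinearMap.BilinForm ℝ M) (hs : ∀ x, 0 ≤ B x x)
    (hB : LinearMap.IsSymm B) (x y : M) : √(B (x - y) (x - y)) ≤ √(B x x) + √(B y y) := by
  have hcs : |B x y| ≤ √(B x x) * √(B y y) := by
    rw [← Real.sqrt_mul (hs x), ← Real.sqrt_sq_eq_abs]
    exact Real.sqrt_le_sqrt (B.apply_sq_le_of_symm hs hB x y)
  have hexp : B (x - y) (x - y) = B x x - 2 * B x y + B y y := by
    have hyx : B y x = B x y := hB.eq y x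
    simp only [map_sub, LinearMap.sub_apply, hyx]
    ring
  rw [Real.sqrt_le_left (by positivity), hexp]
  nlinarith [Real.sq_sqrt (hs x), Real.sq_sqrt (hs y), neg_abs_le (B x y)]

end LinearMap.BilinForm

section PerturbedNorm

variable {E : Type*} [NormedAddCommGroup E] [InnerProductSpace ℝ E]

theorem ContinuousLinearMap.inner_apply_self_le (h : E →L[ℝ] E) (v : E) :
    ⟪h v, v⟫ ≤ ‖h‖ * ‖v‖ ^ 2 :=
  calc ⟪h v, v⟫ ≤ ‖h v‖ * ‖v‖ := real_inner_le_norm _ _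
    _ ≤ ‖h‖ * ‖v‖ * ‖v‖ := by gcongr; exact h.le_opNorm v
    _ = ‖h‖ * ‖v‖ ^ 2 := by ring

noncomputable def perturbedForm (h : E →L[ℝ] E) : LinearMap.BilinForm ℝ E :=
  innerₗ E + (innerₗ E).comp (h : E →ₗ[ℝ] E)

@[simp]
theorem perturbedForm_apply (h : E →L[ℝ] E) (v w : E) :
    perturbedForm h v w = ⟪v, w⟫ + ⟪h v, w⟫ :=
  rfl

theorem perturbedNorm_eq_sqrt_perturbedForm (h : E →L[ℝ] E) (v : E) :
    perturbedNorm h v = √(perturbedForm h v v) :=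
  rfl

theorem perturbedForm_isSymm {h : E →L[ℝ] E} (hsa : ∀ v w : E, ⟪h v, w⟫ = ⟪v, h w⟫) :
    LinearMap.IsSymm (perturbedForm h) where
  eq v w := by
    rw [RingHom.id_apply, perturbedForm_apply, perturbedForm_apply, hsa, real_inner_comm v w,
      real_inner_comm v (h w)]

theorem perturbedForm_self_nonneg {h : E →L[ℝ] E} (hnorm : ‖h‖ ≤ 1) (v : E) :
    0 ≤ perturbedForm h v v := by
  have hlow : -⟪h v, v⟫ ≤ ‖h‖ * ‖v‖ ^ 2 := by
    simpa only [neg_apply, inner_neg_left, norm_neg] using (-h).inner_apply_self_le v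
  rw [perturbedForm_apply, real_inner_self_eq_norm_sq]
  nlinarith [sq_nonneg ‖v‖]

theorem perturbedNorm_sub_le {h : E →L[ℝ] E} (hsa : ∀ v w : E, ⟪h v, w⟫ = ⟪v, h w⟫)
    (hnorm : ‖h‖ ≤ 1) (v w : E) :
    perturbedNorm h (v - w) ≤ perturbedNorm h v + perturbedNorm h w :=
  (perturbedForm h).sqrt_apply_sub_le (perturbedForm_self_nonneg hnorm)
    (perturbedForm_isSymm hsa) v w

theorem perturbedNorm_le (h : E →L[ℝ] E) (v : E) :
    perturbedNorm h v ≤ √(1 + ‖h‖) * ‖v‖ := by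
  rw [perturbedNorm, ← Real.sqrt_sq (norm_nonneg v), ← Real.sqrt_mul (by positivity)]
  apply Real.sqrt_le_sqrt
  rw [real_inner_self_eq_norm_sq]
  linarith [h.inner_apply_self_le v]

/-- `1 - h / 2` is the first-order approximation of `(1 + h)^{-1/2}`, so it is a contraction
from `‖·‖` to `‖·‖_h`. -/
theorem perturbedNorm_sub_half_smul_le {h : E →L[ℝ] E} (hsa : ∀ v w : E, ⟪h v, w⟫ = ⟪v, h w⟫)
    (hnorm : ‖h‖ ≤ 1) (J : E) :
    perturbedNorm h (J - (1 / 2 : ℝ) • h J) ≤ ‖J‖ := by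
  have hexp : perturbedForm h (J - (1 / 2 : ℝ) • h J) (J - (1 / 2 : ℝ) • h J)
      = ‖J‖ ^ 2 - 3 / 4 * ‖h J‖ ^ 2 + 1 / 4 * ⟪h (h J), h J⟫ := by
    rw [perturbedForm_apply]
    simp only [map_sub, map_smul, inner_sub_left, inner_sub_right,
      real_inner_smul_left, real_inner_smul_right, ← real_inner_self_eq_norm_sq]
    rw [hsa J J, real_inner_comm (h J) J, hsa (h J) J, hsa J (h J)]
    ring
  have hhJ : ⟪h (h J), h J⟫ ≤ ‖h J‖ ^ 2 := by
    nlinarith [h.inner_apply_self_le (h J), sq_nonneg ‖h J‖]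
  rw [perturbedNorm_eq_sqrt_perturbedForm, Real.sqrt_le_left (norm_nonneg J), hexp]
  nlinarith [sq_nonneg ‖h J‖]

theorem perturbedNorm_smul_apply_le {h : E →L[ℝ] E} (hnorm : ‖h‖ ≤ 1) {φ : ℝ} (hφ : |φ| ≤ 1)
    {Z : E} (hZ : ‖Z‖ ≤ 1) :
    perturbedNorm h ((φ * ‖Z‖) • h Z) ≤ 2 * √‖h‖ * √|φ| * ‖Z‖ :=
  calc perturbedNorm h ((φ * ‖Z‖) • h Z)
      ≤ √(1 + ‖h‖) * ‖(φ * ‖Z‖) • h Z‖ := perturbedNorm_le h _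
    _ = √(1 + ‖h‖) * (|φ| * ‖Z‖ * ‖h Z‖) := by
        rw [norm_smul, norm_mul, Real.norm_eq_abs, norm_norm]
    _ ≤ 2 * (√|φ| * 1 * (√‖h‖ * ‖Z‖)) := by
        gcongr
        · rw [Real.sqrt_le_left zero_le_two]; linarith
        · exact Real.self_le_sqrt_of_le_one (abs_nonneg φ) hφ
        · exact (h.le_opNorm Z).trans
            (by gcongr; exact Real.self_le_sqrt_of_le_one (norm_nonneg h) hnorm)
    _ = 2 * √‖h‖ * √|φ| * ‖Z‖ := by ring

end PerturbedNorm

theorem perturbedNorm_phiZ_modified_current_le_general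
    {E : Type*} [NormedAddCommGroup E] [InnerProductSpace ℝ E]
    (h : E →L[ℝ] E) (hsa : ∀ v w : E, ⟪h v, w⟫ = ⟪v, h w⟫) (hnorm : ‖h‖ < 1)
    (J Z : E) (φ : ℝ) (hφ : |φ| < 1) (hZ : ‖Z‖ < 1) :
    perturbedNorm h (J - (1 / 2 : ℝ) • h J - (φ * ‖Z‖) • h Z)
      ≤ ‖J‖ + 2 * Real.sqrt ‖h‖ * Real.sqrt |φ| * ‖Z‖ * (Real.sqrt ‖J‖ + 1) := by
  calc perturbedNorm h (J - (1 / 2 : ℝ) • h J - (φ * ‖Z‖) • h Z)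
      ≤ perturbedNorm h (J - (1 / 2 : ℝ) • h J) + perturbedNorm h ((φ * ‖Z‖) • h Z) :=
        perturbedNorm_sub_le hsa hnorm.le _ _
    _ ≤ ‖J‖ + 2 * √‖h‖ * √|φ| * ‖Z‖ :=
        add_le_add (perturbedNorm_sub_half_smul_le hsa hnorm.le J)
          (perturbedNorm_smul_apply_le hnorm.le hφ.le hZ.le)
    _ ≤ ‖J‖ + 2 * √‖h‖ * √|φ| * ‖Z‖ * (√‖J‖ + 1) :=
        add_le_add_right (le_mul_of_one_le_right (by positivity)
          (le_add_of_nonneg_left (Real.sqrt_nonneg _))) _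

/-- if `|φ| < 1`, `‖Z‖ < 1`, and `J̄ := J − (1/2)·h(J) − φ‖Z‖·h(Z)`, then
`‖J̄‖_h ≤ ‖J‖ + 2·‖h‖^{1/2}·|φ|^{1/2}·‖Z‖·(‖J‖^{1/2} + 1)`. -/
theorem perturbedNorm_phiZ_modified_current_le
    {E : Type*} [NormedAddCommGroup E] [InnerProductSpace ℝ E] [FiniteDimensional ℝ E]
    (h : E →L[ℝ] E) (hsa : ∀ v w : E, ⟪h v, w⟫ = ⟪v, h w⟫) (hnorm : ‖h‖ < 1)
    (J Z : E) (φ : ℝ) (hφ : |φ| < 1) (hZ : ‖Z‖ < 1) :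
    perturbedNorm h (J - (1 / 2 : ℝ) • h J - (φ * ‖Z‖) • h Z)
      ≤ ‖J‖ + 2 * Real.sqrt ‖h‖ * Real.sqrt |φ| * ‖Z‖ * (Real.sqrt ‖J‖ + 1) :=
  perturbedNorm_phiZ_modified_current_le_general h hsa hnorm J Z φ hφ hZ
end

section
/- G(u, w) ≥ 0 for every pair of future causal vectors u, w if and only if p ≤ 0. (Pointwise form of: a null perfect fluid spacetime satisfies the spacetime dominant energy condition if and only if its pressure is nonpositive.) -/
open scoped RealInnerProductSpace

/-- The Minkowski inner product on `ℝ × ℝⁿ`: `η(u, w) = −u⁰w⁰ + ⟨u', w'⟩`. -/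
noncomputable def minkEta {n : ℕ} (u w : ℝ × EuclideanSpace ℝ (Fin n)) : ℝ :=
  -(u.1 * w.1) + ⟪u.2, w.2⟫

/-- A vector `u = (u⁰, u')` is future causal if `u⁰ > 0` and `‖u'‖ ≤ u⁰`. -/
def IsFutureCausal {n : ℕ} (u : ℝ × EuclideanSpace ℝ (Fin n)) : Prop :=
  0 < u.1 ∧ ‖u.2‖ ≤ u.1

/-- The null-perfect-fluid Einstein tensor with pressure `p` and velocity `v`:
`G(u, w) := p·η(u, w) + η(v, u)·η(v, w)`. -/
noncomputable def nullFluidG {n : ℕ} (p : ℝ) (v u w : ℝ × EuclideanSpace ℝ (Fin n)) : ℝ :=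
  p * minkEta u w + minkEta v u * minkEta v w

/-!
If `p ≤ 0`, every term of `G(u, w)` is nonnegative, because the Minkowski product of two
vectors in the closed future cone is nonpositive (Cauchy–Schwarz). Conversely, for null `v`
the future causal vector `u = (1, v'/‖v'‖)` is η-orthogonal to `v`, so with `w = (1, 0)` the
velocity term vanishes and `G(u, w) = p · η(u, w) = -p`.
-/

section

variable {n : ℕ}

theorem minkEta_nonpos_of_norm_le {u w : ℝ × EuclideanSpace ℝ (Fin n)}
    (hu : ‖u.2‖ ≤ u.1) (hw : ‖w.2‖ ≤ w.1) : minkEta u w ≤ 0 := by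
  have hw₀ : 0 ≤ w.1 := (norm_nonneg _).trans hw
  have : ⟪u.2, w.2⟫ ≤ u.1 * w.1 := calc
    ⟪u.2, w.2⟫ ≤ ‖u.2‖ * ‖w.2‖ := real_inner_le_norm _ _
    _ ≤ u.1 * w.1 := mul_le_mul hu hw (norm_nonneg _) ((norm_nonneg _).trans hu)
  rw [minkEta]
  linarith

theorem nullFluidG_nonneg_of_pressure_nonpos {p : ℝ} {v u w : ℝ × EuclideanSpace ℝ (Fin n)}
    (hp : p ≤ 0) (hv : ‖v.2‖ ≤ v.1) (hu : IsFutureCausal u) (hw : IsFutureCausal w) :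
    0 ≤ nullFluidG p v u w :=
  add_nonneg (mul_nonneg_of_nonpos_of_nonpos hp (minkEta_nonpos_of_norm_le hu.2 hw.2))
    (mul_nonneg_of_nonpos_of_nonpos (minkEta_nonpos_of_norm_le hv hu.2)
      (minkEta_nonpos_of_norm_le hv hw.2))

theorem minkEta_one_zero (u : ℝ × EuclideanSpace ℝ (Fin n)) : minkEta u (1, 0) = -u.1 := by
  simp [minkEta]

theorem isFutureCausal_one_zero : IsFutureCausal ((1, 0) : ℝ × EuclideanSpace ℝ (Fin n)) := by
  simp [IsFutureCausal]

theorem minkEta_one_inv_norm_smul (v : ℝ × EuclideanSpace ℝ (Fin n)) :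
    minkEta v (1, ‖v.2‖⁻¹ • v.2) = ‖v.2‖ - v.1 := by
  rcases eq_or_ne ‖v.2‖ 0 with h | h
  · simp [minkEta, h]
  · rw [minkEta, real_inner_smul_right, real_inner_self_eq_norm_sq]
    field_simp
    ring

theorem isFutureCausal_one_inv_norm_smul (x : EuclideanSpace ℝ (Fin n)) :
    IsFutureCausal ((1 : ℝ), ‖x‖⁻¹ • x) := by
  refine ⟨one_pos, ?_⟩
  rw [norm_smul, norm_inv, norm_norm]
  exact inv_mul_le_one_of_le₀ le_rfl (norm_nonneg _)

end

theorem nullFluid_dec_iff_pressure_nonpos_general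
    {n : ℕ} (p : ℝ) (v : ℝ × EuclideanSpace ℝ (Fin n))
    (hv : v.1 = ‖v.2‖) :
    (∀ u w : ℝ × EuclideanSpace ℝ (Fin n),
        IsFutureCausal u → IsFutureCausal w → 0 ≤ nullFluidG p v u w) ↔ p ≤ 0 := by
  refine ⟨fun h ↦ ?_, fun hp u w hu hw ↦ nullFluidG_nonneg_of_pressure_nonpos hp hv.ge hu hw⟩
  have hG := h _ _ (isFutureCausal_one_inv_norm_smul v.2) isFutureCausal_one_zero
  rw [nullFluidG, minkEta_one_inv_norm_smul, minkEta_one_zero, hv, sub_self, zero_mul,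
    add_zero] at hG
  simpa using hG

/-- for a null perfect fluid (velocity `v` future null or zero),
`G(u, w) ≥ 0` for all future causal `u, w` iff the pressure `p` is nonpositive. -/
theorem nullFluid_dec_iff_pressure_nonpos
    {n : ℕ} (hn : 1 ≤ n) (p : ℝ) (v : ℝ × EuclideanSpace ℝ (Fin n))
    (hv : v.1 = ‖v.2‖) :
    (∀ u w : ℝ × EuclideanSpace ℝ (Fin n),
        IsFutureCausal u → IsFutureCausal w → 0 ≤ nullFluidG p v u w) ↔ p ≤ 0 :=
  nullFluid_dec_iff_pressure_nonpos_general p v hv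
end

section
/- Let e₀ := (1, 0) and, for 1 ≤ i ≤ n, let eᵢ := (0, i-th standard basis vector of ℝⁿ). Define μ := G(e₀, e₀) and the vector J ∈ ℝⁿ by Jᵢ := G(e₀, eᵢ). Then: ‖J‖ = (v⁰)², p = ‖J‖ − μ, and J = −v⁰·v'; if J ≠ 0 then v⁰ = √‖J‖ and v' = −J/√‖J‖ (i.e., v = (‖J‖·e₀ − (0,J))/√‖J‖); moreover G(eᵢ, eⱼ) = (‖J‖ − μ)δᵢⱼ + JᵢJⱼ/‖J‖ for all 1 ≤ i, j ≤ n when J ≠ 0, and G(eᵢ, eⱼ) = −μ·δᵢⱼ when J = 0. (Pointwise form of the lemma identifying the velocity and pressure of a null perfect fluid along a spacelike hypersurface in terms of the energy and current densities.) -/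
open scoped RealInnerProductSpace

/-!
In the frame `e₀, eᵢ` the tensor has components `G₀₀ = −p + (v⁰)²`, `G₀ᵢ = −v⁰vᵢ` and
`Gᵢⱼ = p δᵢⱼ + vᵢvⱼ`. Since `v` is null, `‖v⁰v'‖ = (v⁰)²`, so the energy current `J` determines
`v⁰ = √‖J‖`, then `v'` (when `v⁰ ≠ 0`) and `p = (v⁰)² − μ`; in the remaining case `J = 0`
forces `v = 0`.
-/

section Components

variable {n : ℕ} (p : ℝ) (v : ℝ × EuclideanSpace ℝ (Fin n))

theorem nullFluidG_time_time : nullFluidG p v (1, 0) (1, 0) = -p + v.1 ^ 2 := by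
  simp only [nullFluidG, minkEta, inner_zero_right]
  ring

theorem nullFluidG_time_single (i : Fin n) :
    nullFluidG p v (1, 0) (0, EuclideanSpace.single i 1) = -v.1 * v.2 i := by
  simp only [nullFluidG, minkEta, EuclideanSpace.inner_single_right, inner_zero_right,
    PiLp.zero_apply, conj_trivial]
  ring

theorem nullFluidG_single_single (i j : Fin n) :
    nullFluidG p v (0, EuclideanSpace.single i 1) (0, EuclideanSpace.single j 1) =
      p * (if i = j then 1 else 0) + v.2 i * v.2 j := by
  simp only [nullFluidG, minkEta, EuclideanSpace.inner_single_right, PiLp.single_apply,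
    conj_trivial, one_mul, mul_zero, neg_zero, zero_add, eq_comm]

end Components

theorem norm_smul_self_of_eq_norm {E : Type*} [SeminormedAddCommGroup E] [NormedSpace ℝ E]
    {a : ℝ} {x : E} (h : a = ‖x‖) : ‖a • x‖ = a ^ 2 := by
  rw [norm_smul, Real.norm_eq_abs, h, abs_norm, sq]

theorem nullFluid_velocity_pressure_from_energy_current_general
    {n : ℕ} (p : ℝ) (v : ℝ × EuclideanSpace ℝ (Fin n))
    (hv : v.1 = ‖v.2‖)
    (e₀ : ℝ × EuclideanSpace ℝ (Fin n)) (he₀ : e₀ = (1, 0))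
    (e : Fin n → ℝ × EuclideanSpace ℝ (Fin n))
    (he : ∀ i, e i = (0, EuclideanSpace.single i 1))
    (μ : ℝ) (hμ : μ = nullFluidG p v e₀ e₀)
    (J : EuclideanSpace ℝ (Fin n)) (hJ : ∀ i, J i = nullFluidG p v e₀ (e i)) :
    ‖J‖ = v.1 ^ 2 ∧
      p = ‖J‖ - μ ∧
      J = -v.1 • v.2 ∧
      (J ≠ 0 → v.1 = Real.sqrt ‖J‖ ∧ v.2 = -(Real.sqrt ‖J‖)⁻¹ • J) ∧
      (J ≠ 0 → ∀ i j, nullFluidG p v (e i) (e j) =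
          (‖J‖ - μ) * (if i = j then 1 else 0) + J i * J j / ‖J‖) ∧
      (J = 0 → ∀ i j, nullFluidG p v (e i) (e j) = -μ * (if i = j then 1 else 0)) := by
  have hJv : J = -v.1 • v.2 := by
    ext i
    rw [hJ, he, he₀, nullFluidG_time_single, PiLp.smul_apply, smul_eq_mul]
  have hnJ : ‖J‖ = v.1 ^ 2 := by rw [hJv, neg_smul, norm_neg, norm_smul_self_of_eq_norm hv]
  have hp : p = ‖J‖ - μ := by rw [hnJ, hμ, he₀, nullFluidG_time_time]; ring
  have hsqrt : √‖J‖ = v.1 := by rw [hnJ, Real.sqrt_sq (hv ▸ norm_nonneg _)]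
  have hG : ∀ i j, nullFluidG p v (e i) (e j) =
      (‖J‖ - μ) * (if i = j then 1 else 0) + v.2 i * v.2 j := by
    intro i j
    rw [he, he, nullFluidG_single_single, hp]
  have hv₁ : J ≠ 0 → v.1 ≠ 0 := fun hJ0 h ↦ hJ0 (by rw [hJv, h, neg_zero, zero_smul])
  refine ⟨hnJ, hp, hJv, fun hJ0 ↦ ⟨hsqrt.symm, ?_⟩, fun hJ0 i j ↦ ?_, fun hJ0 i j ↦ ?_⟩
  · rw [hsqrt, hJv, smul_smul, neg_mul_neg, inv_mul_cancel₀ (hv₁ hJ0), one_smul]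
  · rw [hG, hnJ, hJv, PiLp.smul_apply, PiLp.smul_apply, smul_eq_mul, smul_eq_mul]
    field_simp [hv₁ hJ0]
  · have hv₂ : v.2 = 0 := by
      rw [← norm_eq_zero, ← hv, ← sq_eq_zero_iff, ← hnJ, hJ0, norm_zero]
    rw [hG, hv₂, hJ0, norm_zero, PiLp.zero_apply, zero_mul, add_zero, zero_sub]

/-- with `e₀ := (1, 0)`, `eᵢ := (0, i`-th standard basis vector`)`,
`μ := G(e₀, e₀)`, `Jᵢ := G(e₀, eᵢ)`, for a null perfect fluid with future null or zero
velocity `v`: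
`‖J‖ = (v⁰)²`, `p = ‖J‖ − μ`, `J = −v⁰·v'`; if `J ≠ 0` then `v⁰ = √‖J‖` and
`v' = −J/√‖J‖`; and `G(eᵢ, eⱼ) = (‖J‖ − μ)δᵢⱼ + JᵢJⱼ/‖J‖` if `J ≠ 0`, while
`G(eᵢ, eⱼ) = −μδᵢⱼ` if `J = 0`. -/
theorem nullFluid_velocity_pressure_from_energy_current
    {n : ℕ} (hn : 1 ≤ n) (p : ℝ) (v : ℝ × EuclideanSpace ℝ (Fin n))
    (hv : v.1 = ‖v.2‖)
    (e₀ : ℝ × EuclideanSpace ℝ (Fin n)) (he₀ : e₀ = (1, 0))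
    (e : Fin n → ℝ × EuclideanSpace ℝ (Fin n))
    (he : ∀ i, e i = (0, EuclideanSpace.single i 1))
    (μ : ℝ) (hμ : μ = nullFluidG p v e₀ e₀)
    (J : EuclideanSpace ℝ (Fin n)) (hJ : ∀ i, J i = nullFluidG p v e₀ (e i)) :
    ‖J‖ = v.1 ^ 2 ∧
      p = ‖J‖ - μ ∧
      J = -v.1 • v.2 ∧
      (J ≠ 0 → v.1 = Real.sqrt ‖J‖ ∧ v.2 = -(Real.sqrt ‖J‖)⁻¹ • J) ∧
      (J ≠ 0 → ∀ i j, nullFluidG p v (e i) (e j) =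
          (‖J‖ - μ) * (if i = j then 1 else 0) + J i * J j / ‖J‖) ∧
      (J = 0 → ∀ i j, nullFluidG p v (e i) (e j) = -μ * (if i = j then 1 else 0)) :=
  nullFluid_velocity_pressure_from_energy_current_general p v hv e₀ he₀ e he μ hμ J hJ
end
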